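/- Let V be a symmetric positive definite real d×d matrix, θ̂ ∈ ℝ^d, β ≥ 0, and B := {θ ∈ ℝ^d : ‖θ̂ − θ‖_V ≤ β}. Let α ∈ (0,1], r_b > 0, and suppose θ* ∈ B, ψ*, ψ̄ ∈ ℝ^d with ‖ψ̄‖₂ ≤ 1, (ψ*)ᵀθ* ≥ r_b, ψ̄ᵀθ* < (1 − α)·r_b, and λ_min(V) ≥ (2β/(α r_b))². Then sup_{θ ∈ B} (ψ*)ᵀθ > sup_{θ ∈ B} ψ̄ᵀθ; i.e., an action whose expected feature vector violates the performance constraint is never the maximizer over the confidence set. -/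

import Mathlib

open Matrix

open scoped Classical in
/-- smallest eigenvalue of a real matrix (junk value 0 if not Hermitian) -/
noncomputable def lamMin {d : ℕ} (V : Matrix (Fin d) (Fin d) ℝ) : ℝ :=
  if h : V.IsHermitian then ⨅ i, h.eigenvalues i else 0

open scoped Classical in
/-- largest eigenvalue of a real matrix (junk value 0 if not Hermitian) -/
noncomputable def lamMax {d : ℕ} (V : Matrix (Fin d) (Fin d) ℝ) : ℝ :=
  if h : V.IsHermitian then ⨆ i, h.eigenvalues i else 0

/-- weighted norm ‖z‖_V = √(zᵀ V z) -/
noncomputable def wnorm {d : ℕ} (V : Matrix (Fin d) (Fin d) ℝ) (z : Fin d → ℝ) : ℝ :=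
  Real.sqrt (z ⬝ᵥ V.mulVec z)

/-- Euclidean norm of a vector in ℝ^d -/
noncomputable def eucNorm {d : ℕ} (z : Fin d → ℝ) : ℝ :=
  Real.sqrt (z ⬝ᵥ z)

/-!
Two points of the confidence ellipsoid `B` are `2β` apart in `‖·‖_V`, and
`√λ_min(V) ‖z‖₂ ≤ ‖z‖_V`, so the bound on `λ_min(V)` puts all of `B` within Euclidean distance
`α r_b` of `θ*`. By Cauchy–Schwarz, `ψᵀθ ≤ ψᵀθ* + ‖ψ‖₂ α r_b` on `B`, whence
`sup_B ψ̄ᵀθ ≤ ψ̄ᵀθ* + α r_b < r_b ≤ (ψ*)ᵀθ* ≤ sup_B (ψ*)ᵀθ`.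
-/

theorem eucNorm_eq_norm_toLp {d : ℕ} (z : Fin d → ℝ) :
    eucNorm z = ‖WithLp.toLp 2 z‖ := by
  simp [eucNorm, EuclideanSpace.norm_eq, dotProduct, sq]

theorem eucNorm_add_le {d : ℕ} (x y : Fin d → ℝ) : eucNorm (x + y) ≤ eucNorm x + eucNorm y := by
  simpa only [eucNorm_eq_norm_toLp, WithLp.toLp_add] using norm_add_le _ _

theorem dotProduct_le_eucNorm_mul {d : ℕ} (x y : Fin d → ℝ) :
    x ⬝ᵥ y ≤ eucNorm x * eucNorm y := by
  simpa [eucNorm_eq_norm_toLp, EuclideanSpace.inner_toLp_toLp, dotProduct_comm]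
    using real_inner_le_norm (WithLp.toLp 2 x) (WithLp.toLp 2 y)

open scoped MatrixOrder in
theorem Matrix.PosSemidef.exists_wnorm_eq_eucNorm_mulVec {d : ℕ}
    {V : Matrix (Fin d) (Fin d) ℝ} (hV : V.PosSemidef) :
    ∃ B : Matrix (Fin d) (Fin d) ℝ, ∀ z, wnorm V z = eucNorm (B *ᵥ z) := by
  obtain ⟨B, rfl⟩ := CStarAlgebra.nonneg_iff_eq_star_mul_self.mp hV.nonneg
  refine ⟨B, fun z => ?_⟩
  rw [wnorm, eucNorm, ← mulVec_mulVec, dotProduct_mulVec, star_eq_conjTranspose,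
    conjTranspose_eq_transpose_of_trivial, vecMul_transpose]

theorem wnorm_add_le {d : ℕ} {V : Matrix (Fin d) (Fin d) ℝ} (hV : V.PosSemidef)
    (x y : Fin d → ℝ) : wnorm V (x + y) ≤ wnorm V x + wnorm V y := by
  obtain ⟨B, hB⟩ := hV.exists_wnorm_eq_eucNorm_mulVec
  simpa only [hB, mulVec_add] using eucNorm_add_le _ _

theorem wnorm_neg {d : ℕ} (V : Matrix (Fin d) (Fin d) ℝ) (x : Fin d → ℝ) :
    wnorm V (-x) = wnorm V x := by
  rw [wnorm, wnorm, mulVec_neg, dotProduct_neg, neg_dotProduct, neg_neg]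

theorem Matrix.IsHermitian.lamMin_le_eigenvalues {d : ℕ} {V : Matrix (Fin d) (Fin d) ℝ}
    (hV : V.IsHermitian) (i : Fin d) : lamMin V ≤ hV.eigenvalues i := by
  rw [lamMin, dif_pos hV]
  exact ciInf_le (Set.finite_range _).bddBelow i

theorem Matrix.PosDef.lamMin_pos {d : ℕ} [Nonempty (Fin d)] {V : Matrix (Fin d) (Fin d) ℝ}
    (hV : V.PosDef) : 0 < lamMin V := by
  rw [lamMin, dif_pos hV.isHermitian]
  obtain ⟨i, hi⟩ := exists_eq_ciInf_of_finite (f := hV.isHermitian.eigenvalues)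
  exact hi ▸ hV.eigenvalues_pos i

theorem Matrix.IsHermitian.lamMin_mul_dotProduct_self_le {d : ℕ}
    {V : Matrix (Fin d) (Fin d) ℝ} (hV : V.IsHermitian) (z : Fin d → ℝ) :
    lamMin V * (z ⬝ᵥ z) ≤ z ⬝ᵥ V *ᵥ z := by
  set U : Matrix (Fin d) (Fin d) ℝ := (hV.eigenvectorUnitary : Matrix (Fin d) (Fin d) ℝ)
  set w : Fin d → ℝ := star U *ᵥ z with hw
  -- `w` holds the coordinates of `z` in an orthonormal eigenbasis of `V`.
  have hzU : z ᵥ* U = w := by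
    rw [hw, star_eq_conjTranspose, conjTranspose_eq_transpose_of_trivial, mulVec_transpose]
  have hquad : z ⬝ᵥ V *ᵥ z = ∑ i, hV.eigenvalues i * w i ^ 2 := by
    conv_lhs => rw [hV.spectral_theorem, Unitary.conjStarAlgAut_apply]
    rw [← mulVec_mulVec, ← mulVec_mulVec, dotProduct_mulVec, hzU]
    simp only [dotProduct, mulVec_diagonal, Function.comp, RCLike.ofReal_real_eq_id, id]
    exact Finset.sum_congr rfl fun i _ => by ring
  have hsq : z ⬝ᵥ z = ∑ i, w i ^ 2 := by
    have hunitary : (z ᵥ* U) ⬝ᵥ (star U *ᵥ z) = z ⬝ᵥ z := by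
      rw [← dotProduct_mulVec, mulVec_mulVec,
        mem_unitaryGroup_iff.mp hV.eigenvectorUnitary.2, one_mulVec]
    rw [← hunitary, hzU, ← hw]
    simp only [dotProduct, sq]
  rw [hquad, hsq, Finset.mul_sum]
  exact Finset.sum_le_sum fun i _ =>
    mul_le_mul_of_nonneg_right (hV.lamMin_le_eigenvalues i) (sq_nonneg _)

theorem Matrix.IsHermitian.sqrt_lamMin_mul_eucNorm_le_wnorm {d : ℕ}
    {V : Matrix (Fin d) (Fin d) ℝ} (hV : V.IsHermitian) (z : Fin d → ℝ) :
    √(lamMin V) * eucNorm z ≤ wnorm V z := by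
  rw [eucNorm, wnorm, ← Real.sqrt_mul' _ (by simpa using dotProduct_self_star_nonneg z)]
  exact Real.sqrt_le_sqrt (hV.lamMin_mul_dotProduct_self_le z)

theorem Matrix.PosDef.eucNorm_le_of_wnorm_le {d : ℕ} {V : Matrix (Fin d) (Fin d) ℝ}
    (hV : V.PosDef) {z : Fin d → ℝ} {r : ℝ} (hr : 0 ≤ r)
    (hz : wnorm V z ≤ √(lamMin V) * r) : eucNorm z ≤ r := by
  rcases isEmpty_or_nonempty (Fin d) with hd | hd
  · simpa [eucNorm, Subsingleton.elim z 0] using hr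
  have hs : 0 < √(lamMin V) := Real.sqrt_pos.mpr hV.lamMin_pos
  exact le_of_mul_le_mul_left ((hV.isHermitian.sqrt_lamMin_mul_eucNorm_le_wnorm z).trans hz) hs

theorem Matrix.PosDef.eucNorm_sub_le_of_wnorm_sub_le {d : ℕ} {V : Matrix (Fin d) (Fin d) ℝ}
    (hV : V.PosDef) {θhat θ θ' : Fin d → ℝ} {β r : ℝ} (hr : 0 < r)
    (hlmin : (2 * β / r) ^ 2 ≤ lamMin V)
    (hθ : wnorm V (θhat - θ) ≤ β) (hθ' : wnorm V (θhat - θ') ≤ β) :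
    eucNorm (θ - θ') ≤ r := by
  refine hV.eucNorm_le_of_wnorm_le hr.le ?_
  calc wnorm V (θ - θ') = wnorm V ((θhat - θ') + -(θhat - θ)) := by congr 1; abel
    _ ≤ wnorm V (θhat - θ') + wnorm V (θhat - θ) :=
        (wnorm_add_le hV.posSemidef _ _).trans_eq (by rw [wnorm_neg])
    _ ≤ 2 * β / r * r := by rw [div_mul_cancel₀ _ hr.ne']; linarith
    _ ≤ √(lamMin V) * r := by gcongr; exact (le_abs_self _).trans (Real.abs_le_sqrt hlmin)

theorem dotProduct_le_dotProduct_add_of_eucNorm_sub_le {d : ℕ} (ψ : Fin d → ℝ)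
    {θ θ' : Fin d → ℝ} {r : ℝ} (h : eucNorm (θ - θ') ≤ r) :
    ψ ⬝ᵥ θ ≤ ψ ⬝ᵥ θ' + eucNorm ψ * r := by
  have hcs := dotProduct_le_eucNorm_mul ψ (θ - θ')
  have hψ : eucNorm ψ * eucNorm (θ - θ') ≤ eucNorm ψ * r :=
    mul_le_mul_of_nonneg_left h (Real.sqrt_nonneg _)
  rw [dotProduct_sub] at hcs
  linarith

theorem stmt4_general {d : ℕ} (V : Matrix (Fin d) (Fin d) ℝ) (hV : V.PosDef)
    (θhat : Fin d → ℝ) (β : ℝ)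
    (B : Set (Fin d → ℝ)) (hB : B = {θ : Fin d → ℝ | wnorm V (θhat - θ) ≤ β})
    (α rb : ℝ) (hα0 : 0 < α) (hrb : 0 < rb)
    (θstar ψstar ψbar : Fin d → ℝ) (hθB : θstar ∈ B)
    (hψbar : eucNorm ψbar ≤ 1)
    (h1 : ψstar ⬝ᵥ θstar ≥ rb)
    (h2 : ψbar ⬝ᵥ θstar < (1 - α) * rb)
    (hlmin : lamMin V ≥ (2 * β / (α * rb)) ^ 2) :
    (⨆ θ : B, ψstar ⬝ᵥ (θ : Fin d → ℝ)) > ⨆ θ : B, ψbar ⬝ᵥ (θ : Fin d → ℝ) := by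
  have hαrb : 0 < α * rb := mul_pos hα0 hrb
  have hmem : ∀ θ ∈ B, wnorm V (θhat - θ) ≤ β := fun θ hθ => by rwa [hB] at hθ
  have hbound (ψ : Fin d → ℝ) (θ : B) :
      ψ ⬝ᵥ (θ : Fin d → ℝ) ≤ ψ ⬝ᵥ θstar + eucNorm ψ * (α * rb) :=
    dotProduct_le_dotProduct_add_of_eucNorm_sub_le ψ
      (hV.eucNorm_sub_le_of_wnorm_sub_le hαrb hlmin (hmem θ θ.2) (hmem θstar hθB))
  have : Nonempty B := ⟨⟨θstar, hθB⟩⟩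
  show _ < _
  calc (⨆ θ : B, ψbar ⬝ᵥ (θ : Fin d → ℝ)) ≤ ψbar ⬝ᵥ θstar + α * rb :=
        ciSup_le fun θ => (hbound ψbar θ).trans
          (add_le_add_right (mul_le_of_le_one_left hαrb.le hψbar) _)
    _ < rb := by linarith
    _ ≤ ψstar ⬝ᵥ θstar := h1
    _ ≤ ⨆ θ : B, ψstar ⬝ᵥ (θ : Fin d → ℝ) :=
        le_ciSup ⟨_, Set.forall_mem_range.2 (hbound ψstar)⟩ ⟨θstar, hθB⟩

theorem stmt4 {d : ℕ} (V : Matrix (Fin d) (Fin d) ℝ) (hV : V.PosDef)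
    (θhat : Fin d → ℝ) (β : ℝ) (hβ : 0 ≤ β)
    (B : Set (Fin d → ℝ)) (hB : B = {θ : Fin d → ℝ | wnorm V (θhat - θ) ≤ β})
    (α rb : ℝ) (hα0 : 0 < α) (hα1 : α ≤ 1) (hrb : 0 < rb)
    (θstar ψstar ψbar : Fin d → ℝ) (hθB : θstar ∈ B)
    (hψbar : eucNorm ψbar ≤ 1)
    (h1 : ψstar ⬝ᵥ θstar ≥ rb)
    (h2 : ψbar ⬝ᵥ θstar < (1 - α) * rb)
    (hlmin : lamMin V ≥ (2 * β / (α * rb)) ^ 2) :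
    (⨆ θ : B, ψstar ⬝ᵥ (θ : Fin d → ℝ)) > ⨆ θ : B, ψbar ⬝ᵥ (θ : Fin d → ℝ) :=
  stmt4_general V hV θhat β B hB α rb hα0 hrb θstar ψstar ψbar hθB hψbar h1 h2 hlmin
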